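/- Let (W,w,𝓕) be a fusion frame system for H in which every local frame vector f_i^l has norm 1, let v be weights, let S_𝓕 be the frame operator of the combined family 𝓕 = {f_i^l}_{i,l} (S_𝓕 f = Σ_{i,l} ⟨f,f_i^l⟩ f_i^l), and set 𝓖_c = {𝓖_{c,i}}_i with 𝓖_{c,i} = {(1/(w_i v_i)) S_𝓕^{-1} f_i^l}_{l∈L_i}. Then: (1) (S_𝓕^{-1}W, v, 𝓖_c) is a dual fusion frame system of (W,w,𝓕) with C_{𝓖_c}C_𝓕* component preserving, and it minimizes the one-erasure mean square error Σ_{(i,l)} ‖T_{V,v'} C_𝓖 M_{(i,l)} C_𝓕* T*_{W,w}‖_F² over all dual fusion frame systems (V,v',𝓖) of (W,w,𝓕); (2) every dual fusion frame system (V,v',𝓖) attaining this minimum satisfies T_{V,v'} C_𝓖 = T_{S_𝓕^{-1}W,v} C_{𝓖_c}; (3) if moreover C_𝓖C_𝓕* is component preserving and v' = v, then V_i = S_𝓕^{-1} W_i and 𝓖_i = 𝓖_{c,i} for all i. -/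

import Mathlib

noncomputable section

open scoped InnerProductSpace

variable {𝕜 : Type} [RCLike 𝕜]
variable {H : Type} [NormedAddCommGroup H] [InnerProductSpace 𝕜 H] [FiniteDimensional 𝕜 H]
variable {m : ℕ}

/-- The Hilbert space `𝒲 = ⊕ᵢ Wᵢ` of a fusion sequence, with the ℓ² inner product. -/
abbrev FFSpace (W : Fin m → Submodule 𝕜 H) : Type := PiLp 2 (fun i => ↥(W i))

/-- The synthesis operator `T_{W,w} : 𝒲 → H`, `(fᵢ)ᵢ ↦ Σᵢ wᵢ fᵢ`. -/
def synthOp (W : Fin m → Submodule 𝕜 H) (w : Fin m → ℝ) : FFSpace W →ₗ[𝕜] H where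
  toFun f := ∑ i, (w i : 𝕜) • (f i : H)
  map_add' f g := by
    simp [Finset.sum_add_distrib, smul_add]
  map_smul' c f := by
    simp [Finset.smul_sum]
    congr 1; funext i; rw [smul_comm]

/-- The analysis operator `T*_{W,w} : H → 𝒲`, `f ↦ (wᵢ π_{Wᵢ} f)ᵢ`. -/
def analysisOp (W : Fin m → Submodule 𝕜 H) (w : Fin m → ℝ) : H →ₗ[𝕜] FFSpace W where
  toFun f := WithLp.toLp 2 (fun i => (w i : 𝕜) • ((W i).orthogonalProjectionOnto f))
  map_add' f g := by
    ext i : 2; simp [smul_add]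
  map_smul' c f := by
    ext i : 2; simp; rw [smul_comm]

/-- The coordinate operator `M_{J,W} : 𝒲 → 𝒲`, keeping the coordinates in `J`. -/
def MJ (W : Fin m → Submodule 𝕜 H) (J : Finset (Fin m)) : FFSpace W →ₗ[𝕜] FFSpace W where
  toFun f := WithLp.toLp 2 (fun j => if j ∈ J then f j else 0)
  map_add' f g := by
    ext j : 2; by_cases h : j ∈ J <;> simp [h]
  map_smul' c f := by
    ext j : 2; by_cases h : j ∈ J <;> simp [h]

/-- `Q : 𝒲 → 𝒱` is block-diagonal if `Q M_{j,W} 𝒲 ⊆ M_{j,V} 𝒱` for all `j`. -/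
def IsBlockDiagonal (W V : Fin m → Submodule 𝕜 H) (Q : FFSpace W →ₗ[𝕜] FFSpace V) : Prop :=
  ∀ j, LinearMap.range (Q ∘ₗ MJ W {j}) ≤ LinearMap.range (MJ V {j})

/-- `Q : 𝒲 → 𝒱` is component preserving if `Q M_{j,W} 𝒲 = M_{j,V} 𝒱` for all `j`. -/
def IsComponentPreserving (W V : Fin m → Submodule 𝕜 H) (Q : FFSpace W →ₗ[𝕜] FFSpace V) : Prop :=
  ∀ j, LinearMap.range (Q ∘ₗ MJ W {j}) = LinearMap.range (MJ V {j})

/-- The orthogonal projection onto `U` as an endomorphism of `H`. -/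
def projL (U : Submodule 𝕜 H) : H →ₗ[𝕜] H :=
  U.subtype ∘ₗ (U.orthogonalProjectionOnto : H →L[𝕜] U).toLinearMap

/-- The coefficient space `⊕ᵢ 𝔽^{Lᵢ}`. -/
abbrev CoefSpace (𝕜 : Type) [RCLike 𝕜] {m : ℕ} (L : Fin m → Type) [∀ i, Fintype (L i)] : Type :=
  PiLp 2 (fun i => EuclideanSpace 𝕜 (L i))

/-- The operator `C_𝓕 : ⊕ᵢ 𝔽^{Lᵢ} → 𝒲`, `((xᵢˡ)ₗ)ᵢ ↦ (Σₗ xᵢˡ fᵢˡ)ᵢ`, associated to a family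
of local frames `𝓕ᵢ = {fᵢˡ}ₗ ⊂ Wᵢ`. -/
def CFop (W : Fin m → Submodule 𝕜 H) (L : Fin m → Type) [∀ i, Fintype (L i)]
    (F : ∀ i, L i → ↥(W i)) : CoefSpace 𝕜 L →ₗ[𝕜] FFSpace W where
  toFun x := WithLp.toLp 2 (fun i => ∑ l, x i l • F i l)
  map_add' x y := by
    rw [WithLp.ext_iff]; funext i
    show ∑ l, (x i l + y i l) • F i l = _
    simp [Finset.sum_add_distrib, add_smul]
  map_smul' c x := by
    rw [WithLp.ext_iff]; funext i
    show ∑ l, (c * x i l) • F i l = _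
    simp [Finset.smul_sum, smul_smul]

/-- The adjoint `C*_𝓕 : 𝒲 → ⊕ᵢ 𝔽^{Lᵢ}`, `(gᵢ)ᵢ ↦ ((⟨fᵢˡ, gᵢ⟩)ₗ)ᵢ` (inner products taken in
Mathlib's convention, conjugate-linear in the first variable). -/
def CFadj (W : Fin m → Submodule 𝕜 H) (L : Fin m → Type) [∀ i, Fintype (L i)]
    (F : ∀ i, L i → ↥(W i)) : FFSpace W →ₗ[𝕜] CoefSpace 𝕜 L where
  toFun g := WithLp.toLp 2 (fun i => WithLp.toLp 2 (fun l => (inner 𝕜 (F i l) (g i) : 𝕜)))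
  map_add' x y := by
    ext i l : 4
    show (inner 𝕜 (F i l) (x i + y i) : 𝕜) = _
    simp [inner_add_right]
  map_smul' c x := by
    ext i l : 4
    show (inner 𝕜 (F i l) (c • x i) : 𝕜) = _
    simp [inner_smul_right]

/-- The coordinate operator `M_{(i₀,l₀)}` on `⊕ᵢ 𝔽^{Lᵢ}`, zeroing all coordinates except
the `(i₀,l₀)`-th one. -/
def Mpair (L : Fin m → Type) [∀ i, Fintype (L i)] [∀ i, DecidableEq (L i)]
    (i₀ : Fin m) (l₀ : L i₀) : CoefSpace 𝕜 L →ₗ[𝕜] CoefSpace 𝕜 L where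
  toFun x := WithLp.toLp 2 (Pi.single i₀ (EuclideanSpace.single l₀ (x i₀ l₀)) : ∀ j, EuclideanSpace 𝕜 (L j))
  map_add' x y := by
    ext j l : 4
    by_cases h : j = i₀
    · subst h
      by_cases h' : l = l₀ <;>
        simp [Pi.single_eq_same, EuclideanSpace.single_apply, h']
    · simp [Pi.single_eq_of_ne h]
  map_smul' c x := by
    ext j l : 4
    by_cases h : j = i₀
    · subst h
      by_cases h' : l = l₀ <;>
        simp [Pi.single_eq_same, EuclideanSpace.single_apply, h']
    · simp [Pi.single_eq_of_ne h]

/-- The frame operator `S_𝓕 f = Σᵢ Σₗ ⟨fᵢˡ, f⟩ fᵢˡ` of the combined local family `𝓕`. -/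
def SFop (W : Fin m → Submodule 𝕜 H) (L : Fin m → Type) [∀ i, Fintype (L i)]
    (F : ∀ i, L i → ↥(W i)) : H →ₗ[𝕜] H where
  toFun f := ∑ i, ∑ l, (inner 𝕜 ((F i l : H)) f : 𝕜) • (F i l : H)
  map_add' x y := by
    simp [inner_add_right, add_smul, Finset.sum_add_distrib]
  map_smul' c x := by
    simp [inner_smul_right, smul_smul, Finset.smul_sum]

/-- The canonical local frames `𝓖_{c,i} = {(1/(wᵢvᵢ)) S_𝓕⁻¹ fᵢˡ}ₗ` of the subspaces
`S_𝓕⁻¹ Wᵢ`, with the inverse of `S_𝓕` given by `Sinv`. -/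
def Gc (W : Fin m → Submodule 𝕜 H) (L : Fin m → Type) [∀ i, Fintype (L i)]
    (F : ∀ i, L i → ↥(W i)) (w v : Fin m → ℝ) (Sinv : H →ₗ[𝕜] H)
    (h : SFop W L F ∘ₗ Sinv = LinearMap.id) :
    ∀ i, L i → ↥(Submodule.comap (SFop W L F) (W i)) :=
  fun i l => ⟨((w i * v i : ℝ) : 𝕜)⁻¹ • Sinv (F i l : H),
    Submodule.smul_mem _ _ (Submodule.mem_comap.mpr (by
      have := LinearMap.congr_fun h ((F i l : H))
      simp only [LinearMap.comp_apply, LinearMap.id_apply] at this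
      rw [this]; exact (F i l).2))⟩

/-- The squared Frobenius norm `‖B‖_F² = tr(B*B)` of a linear map between
finite-dimensional inner product spaces. -/
def frobSq {𝕜 : Type} [RCLike 𝕜] {E F : Type} [NormedAddCommGroup E] [InnerProductSpace 𝕜 E]
    [FiniteDimensional 𝕜 E] [NormedAddCommGroup F] [InnerProductSpace 𝕜 F]
    [FiniteDimensional 𝕜 F] (B : E →ₗ[𝕜] F) : ℝ :=
  RCLike.re (LinearMap.trace 𝕜 E (LinearMap.adjoint B ∘ₗ B))


/-!
Put `hᵢₗ = wᵢ v'ᵢ gᵢˡ`. Then `T_{V,v'} C_𝓖 C_𝓕* T*_{W,w} x = Σ ⟨fᵢˡ, x⟩ hᵢₗ`, so `(V,v',𝓖)` is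
a dual fusion frame system exactly when `{hᵢₗ}` is a dual frame of the combined frame
`{fᵢˡ}`. The `(i,l)` erasure operator is the rank-one map `x ↦ ⟨fᵢˡ, x⟩ hᵢₗ`, of squared
Frobenius norm `‖hᵢₗ‖²` since `‖fᵢˡ‖ = 1`, so the mean square error is `Σ ‖hᵢₗ‖²`. For
`𝓖_c` one gets `hᵢₗ = S_𝓕⁻¹ fᵢˡ`, the canonical dual frame, and for every dual frame `h`
the family `h - S_𝓕⁻¹ 𝓕` is orthogonal to `S_𝓕⁻¹ 𝓕` in `ℓ²`: the cross term is the trace of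
`(S_𝓕⁻¹)* ∘ (x ↦ Σ ⟨fᵢˡ, x⟩ (hᵢₗ - S_𝓕⁻¹ fᵢˡ)) = 0`. Hence
`Σ ‖hᵢₗ‖² = Σ ‖S_𝓕⁻¹ fᵢˡ‖² + Σ ‖hᵢₗ - S_𝓕⁻¹ fᵢˡ‖²`, which gives minimality and both
uniqueness statements. Component preservation of `C_{𝓖_c} C_𝓕*` comes from the
surjectivity of the local frame operators of the `𝓕ᵢ` on the `Wᵢ`.
-/

open InnerProductSpace

section MixedFrameOperator

variable {E F : Type} [NormedAddCommGroup E] [InnerProductSpace 𝕜 E]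
  [NormedAddCommGroup F] [InnerProductSpace 𝕜 F] {ι : Type} [Fintype ι]

variable (𝕜) in
def mixedFrameOp (f : ι → E) (g : ι → F) : E →ₗ[𝕜] F :=
  ∑ k, (rankOne 𝕜 (g k) (f k)).toLinearMap

@[simp]
lemma mixedFrameOp_apply (f : ι → E) (g : ι → F) (x : E) :
    mixedFrameOp 𝕜 f g x = ∑ k, ⟪f k, x⟫_𝕜 • g k := by
  simp [mixedFrameOp]

lemma mixedFrameOp_comp {G : Type} [NormedAddCommGroup G] [InnerProductSpace 𝕜 G]
    (f : ι → E) (g : ι → F) (A : F →ₗ[𝕜] G) :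
    mixedFrameOp 𝕜 f (A ∘ g) = A ∘ₗ mixedFrameOp 𝕜 f g := by
  ext x
  simp

lemma trace_mixedFrameOp [FiniteDimensional 𝕜 E] (f g : ι → E) :
    LinearMap.trace 𝕜 E (mixedFrameOp 𝕜 f g) = ∑ k, ⟪f k, g k⟫_𝕜 := by
  simp [mixedFrameOp, map_sum, trace_rankOne]

lemma mixedFrameOp_self_surjective [FiniteDimensional 𝕜 E] (f : ι → E)
    (hf : Submodule.span 𝕜 (Set.range f) = ⊤) : Function.Surjective (mixedFrameOp 𝕜 f f) := by
  refine LinearMap.injective_iff_surjective.mp ?_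
  rw [← LinearMap.ker_eq_bot, Submodule.eq_bot_iff]
  intro x hx
  have hsum : ∑ k, ‖⟪f k, x⟫_𝕜‖ ^ 2 = 0 := by
    have := congrArg (fun y => RCLike.re ⟪x, y⟫_𝕜) (LinearMap.mem_ker.mp hx)
    simp only [mixedFrameOp_apply, inner_sum, inner_smul_right, inner_zero_right, map_zero,
      map_sum] at this
    rw [← this]
    refine Finset.sum_congr rfl fun k _ => ?_
    rw [← inner_conj_symm x (f k), RCLike.mul_conj, ← RCLike.ofReal_pow, RCLike.ofReal_re]
  have horth : ∀ k, ⟪f k, x⟫_𝕜 = 0 := fun k => by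
    simpa using (Finset.sum_eq_zero_iff_of_nonneg (fun k _ => sq_nonneg _)).mp hsum k
      (Finset.mem_univ k)
  suffices Submodule.span 𝕜 (Set.range f) ≤ (𝕜 ∙ x)ᗮ by simpa [hf] using this
  rw [Submodule.span_le]
  rintro _ ⟨k, rfl⟩
  exact Submodule.mem_orthogonal_singleton_iff_inner_right.mpr (inner_eq_zero_symm.mp (horth k))

lemma frobSq_rankOne [FiniteDimensional 𝕜 E] [FiniteDimensional 𝕜 F] (x : F) (y : E) :
    frobSq (rankOne 𝕜 x y).toLinearMap = ‖x‖ ^ 2 * ‖y‖ ^ 2 := by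
  have := FiniteDimensional.complete 𝕜 E
  have := FiniteDimensional.complete 𝕜 F
  rw [frobSq, ContinuousLinearMap.adjoint_toLinearMap, adjoint_rankOne,
    ← ContinuousLinearMap.toLinearMap_comp, rankOne_comp_rankOne,
    ContinuousLinearMap.toLinearMap_smul, map_smul, trace_rankOne, inner_self_eq_norm_sq_to_K,
    inner_self_eq_norm_sq_to_K, smul_eq_mul,
    ← RCLike.ofReal_pow, ← RCLike.ofReal_pow, ← RCLike.ofReal_mul, RCLike.ofReal_re]

variable [FiniteDimensional 𝕜 E] [FiniteDimensional 𝕜 F]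

lemma sum_norm_sq_eq_of_mixedFrameOp_eq (f : ι → E) (g : ι → F) (B : E →ₗ[𝕜] F)
    (hg : mixedFrameOp 𝕜 f g = mixedFrameOp 𝕜 f (B ∘ f)) :
    ∑ k, ‖g k‖ ^ 2 = ∑ k, ‖B (f k)‖ ^ 2 + ∑ k, ‖g k - B (f k)‖ ^ 2 := by
  set u := fun k => g k - B (f k)
  have hu : mixedFrameOp 𝕜 f u = 0 := by
    ext x
    have := LinearMap.congr_fun hg x
    simp only [mixedFrameOp_apply, Function.comp_apply] at this
    simp [u, smul_sub, Finset.sum_sub_distrib, this]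
  have hcross : ∑ k, ⟪B (f k), u k⟫_𝕜 = 0 := calc
    ∑ k, ⟪B (f k), u k⟫_𝕜 = ∑ k, ⟪f k, (LinearMap.adjoint B ∘ u) k⟫_𝕜 := by
      simp [LinearMap.adjoint_inner_right]
    _ = 0 := by rw [← trace_mixedFrameOp, mixedFrameOp_comp, hu, LinearMap.comp_zero, map_zero]
  calc ∑ k, ‖g k‖ ^ 2 = ∑ k, ‖B (f k) + u k‖ ^ 2 := by simp [u]
    _ = ∑ k, ‖B (f k)‖ ^ 2 + 2 * RCLike.re (∑ k, ⟪B (f k), u k⟫_𝕜) + ∑ k, ‖u k‖ ^ 2 := by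
      simp only [norm_add_sq (𝕜 := 𝕜), Finset.sum_add_distrib, map_sum, Finset.mul_sum]
    _ = _ := by simp [hcross, u]

lemma sum_norm_sq_le_of_mixedFrameOp_eq (f : ι → E) (g : ι → F) (B : E →ₗ[𝕜] F)
    (hg : mixedFrameOp 𝕜 f g = mixedFrameOp 𝕜 f (B ∘ f)) :
    ∑ k, ‖B (f k)‖ ^ 2 ≤ ∑ k, ‖g k‖ ^ 2 := by
  rw [sum_norm_sq_eq_of_mixedFrameOp_eq f g B hg]
  exact le_add_of_nonneg_right (Finset.sum_nonneg fun k _ => sq_nonneg _)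

lemma eq_comp_of_mixedFrameOp_eq_of_sum_norm_sq_eq (f : ι → E) (g : ι → F) (B : E →ₗ[𝕜] F)
    (hg : mixedFrameOp 𝕜 f g = mixedFrameOp 𝕜 f (B ∘ f))
    (hnorm : ∑ k, ‖g k‖ ^ 2 = ∑ k, ‖B (f k)‖ ^ 2) : g = B ∘ f := by
  rw [sum_norm_sq_eq_of_mixedFrameOp_eq f g B hg, add_eq_left,
    Finset.sum_eq_zero_iff_of_nonneg fun k _ => sq_nonneg _] at hnorm
  funext k
  simpa [sub_eq_zero] using hnorm k (Finset.mem_univ k)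

end MixedFrameOperator

section FusionFrameSystem

open scoped Pointwise

variable {E : Type} [NormedAddCommGroup E] [InnerProductSpace 𝕜 E] {L : Fin m → Type}

def flatFamily {U : Fin m → Submodule 𝕜 E} (G : ∀ i, L i → ↥(U i)) : (Σ i, L i) → E :=
  fun k => G k.1 k.2

def scaledFamily {U : Fin m → Submodule 𝕜 E} (c : Fin m → ℝ) (G : ∀ i, L i → ↥(U i)) :
    (Σ i, L i) → E :=
  fun k => (c k.1 : 𝕜) • flatFamily G k

lemma scaledFamily_mul {U : Fin m → Submodule 𝕜 E} (c d : Fin m → ℝ) (G : ∀ i, L i → ↥(U i))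
    (k : Σ i, L i) : scaledFamily (c * d) G k = (c k.1 : 𝕜) • scaledFamily d G k := by
  simp [scaledFamily, smul_smul]

lemma scaledFamily_eq_of_mul_eq {U U' : Fin m → Submodule 𝕜 E} {c d d' : Fin m → ℝ}
    (hc : ∀ i, c i ≠ 0) {G : ∀ i, L i → ↥(U i)} {G' : ∀ i, L i → ↥(U' i)}
    (h : scaledFamily (c * d) G = scaledFamily (c * d') G') :
    scaledFamily d G = scaledFamily d' G' := by
  funext k
  have := congrFun h k
  rw [scaledFamily_mul, scaledFamily_mul] at this
  exact smul_right_injective E (RCLike.ofReal_ne_zero.mpr (hc k.1)) this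

variable [∀ i, Fintype (L i)]

lemma synthOp_comp_CFop_apply (V : Fin m → Submodule 𝕜 E) (v : Fin m → ℝ)
    (G : ∀ i, L i → ↥(V i)) (c : CoefSpace 𝕜 L) :
    (synthOp V v ∘ₗ CFop V L G) c = ∑ k : Σ i, L i, c k.1 k.2 • scaledFamily v G k := by
  simp only [synthOp, CFop, LinearMap.coe_comp, LinearMap.coe_mk, AddHom.coe_mk,
    Function.comp_apply, Submodule.coe_sum, Submodule.coe_smul, Finset.smul_sum,
    Fintype.sum_sigma, scaledFamily, flatFamily]
  exact Finset.sum_congr rfl fun i _ => Finset.sum_congr rfl fun l _ => smul_comm _ _ _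

lemma synthOp_comp_CFop_congr {V V' : Fin m → Submodule 𝕜 E} {v v' : Fin m → ℝ}
    {G : ∀ i, L i → ↥(V i)} {G' : ∀ i, L i → ↥(V' i)}
    (h : scaledFamily v G = scaledFamily v' G') :
    synthOp V v ∘ₗ CFop V L G = synthOp V' v' ∘ₗ CFop V' L G' := by
  ext1 c
  simp only [synthOp_comp_CFop_apply, h]

lemma CFadj_comp_analysisOp_apply [FiniteDimensional 𝕜 E] (W : Fin m → Submodule 𝕜 E)
    (w : Fin m → ℝ) (F : ∀ i, L i → ↥(W i)) (x : E) (i : Fin m) (l : L i) :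
    (CFadj W L F ∘ₗ analysisOp W w) x i l = (w i : 𝕜) * ⟪(F i l : E), x⟫_𝕜 := by
  simp only [CFadj, analysisOp, LinearMap.coe_comp, LinearMap.coe_mk, AddHom.coe_mk,
    Function.comp_apply, inner_smul_right,
    Submodule.inner_orthogonalProjectionOnto_eq_of_mem_left]

lemma synthOp_comp_CFop_comp_CFadj_comp_analysisOp [FiniteDimensional 𝕜 E]
    (W V : Fin m → Submodule 𝕜 E) (w v : Fin m → ℝ) (F : ∀ i, L i → ↥(W i))
    (G : ∀ i, L i → ↥(V i)) :
    synthOp V v ∘ₗ CFop V L G ∘ₗ CFadj W L F ∘ₗ analysisOp W w =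
      mixedFrameOp 𝕜 (flatFamily F) (scaledFamily (w * v) G) := by
  ext x
  change (synthOp V v ∘ₗ CFop V L G) ((CFadj W L F ∘ₗ analysisOp W w) x) = _
  simp only [synthOp_comp_CFop_apply, CFadj_comp_analysisOp_apply, mixedFrameOp_apply,
    scaledFamily_mul, mul_smul, flatFamily]
  exact Finset.sum_congr rfl fun k _ => smul_comm _ _ _

lemma Mpair_apply_sigma [∀ i, DecidableEq (L i)] (i₀ : Fin m) (l₀ : L i₀) (x : CoefSpace 𝕜 L)
    (k : Σ i, L i) : Mpair L i₀ l₀ x k.1 k.2 = if k = ⟨i₀, l₀⟩ then x i₀ l₀ else 0 := by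
  obtain ⟨i, l⟩ := k
  by_cases hi : i = i₀
  · subst hi
    by_cases hl : l = l₀ <;> simp [Mpair, hl]
  · simp [Mpair, hi]

lemma erasure_eq_rankOne [FiniteDimensional 𝕜 E] [∀ i, DecidableEq (L i)]
    (W V : Fin m → Submodule 𝕜 E) (w v : Fin m → ℝ) (F : ∀ i, L i → ↥(W i))
    (G : ∀ i, L i → ↥(V i)) (i : Fin m) (l : L i) :
    (synthOp V v ∘ₗ CFop V L G) ∘ₗ Mpair L i l ∘ₗ CFadj W L F ∘ₗ analysisOp W w =
      (rankOne 𝕜 (scaledFamily (w * v) G ⟨i, l⟩) (F i l : E)).toLinearMap := by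
  ext x
  change (synthOp V v ∘ₗ CFop V L G) (Mpair L i l ((CFadj W L F ∘ₗ analysisOp W w) x)) = _
  simp only [synthOp_comp_CFop_apply, Mpair_apply_sigma, ite_smul, zero_smul,
    Finset.sum_ite_eq', Finset.mem_univ, if_true, CFadj_comp_analysisOp_apply,
    ContinuousLinearMap.coe_coe, rankOne_apply, scaledFamily_mul, mul_smul]
  exact smul_comm _ _ _

lemma sum_frobSq_erasure [FiniteDimensional 𝕜 E] [∀ i, DecidableEq (L i)]
    (W V : Fin m → Submodule 𝕜 E) (w v : Fin m → ℝ) (F : ∀ i, L i → ↥(W i))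
    (G : ∀ i, L i → ↥(V i)) (hF : ∀ i l, ‖(F i l : E)‖ = 1) :
    ∑ i, ∑ l, frobSq ((synthOp V v ∘ₗ CFop V L G) ∘ₗ Mpair L i l ∘ₗ
        CFadj W L F ∘ₗ analysisOp W w) = ∑ k, ‖scaledFamily (w * v) G k‖ ^ 2 := by
  simp [erasure_eq_rankOne, frobSq_rankOne, hF, Fintype.sum_sigma]

lemma SFop_eq_mixedFrameOp (W : Fin m → Submodule 𝕜 E) (F : ∀ i, L i → ↥(W i)) :
    SFop W L F = mixedFrameOp 𝕜 (flatFamily F) (flatFamily F) := by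
  ext x
  simp [SFop, flatFamily, Fintype.sum_sigma]

lemma scaledFamily_Gc (W : Fin m → Submodule 𝕜 E) (F : ∀ i, L i → ↥(W i)) {w v : Fin m → ℝ}
    (hwv : ∀ i, w i * v i ≠ 0) (Sinv : E →ₗ[𝕜] E) (h : SFop W L F ∘ₗ Sinv = LinearMap.id) :
    scaledFamily (w * v) (Gc W L F w v Sinv h) = Sinv ∘ flatFamily F := by
  funext k
  simp only [scaledFamily, flatFamily, Gc, Pi.mul_apply, Function.comp_apply, smul_smul]
  rw [mul_inv_cancel₀ (RCLike.ofReal_ne_zero.mpr (hwv k.1)), one_smul]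

lemma isComponentPreserving_of_surjective {W V : Fin m → Submodule 𝕜 E}
    (Q : FFSpace W →ₗ[𝕜] FFSpace V) (Qj : ∀ j, W j →ₗ[𝕜] V j) (hQ : ∀ g j, Q g j = Qj j (g j))
    (hQj : ∀ j, Function.Surjective (Qj j)) : IsComponentPreserving W V Q := by
  intro j
  ext x
  simp only [LinearMap.mem_range, LinearMap.comp_apply]
  constructor
  · rintro ⟨g, rfl⟩
    refine ⟨Q (MJ W {j} g), PiLp.ext fun k => ?_⟩
    by_cases hk : k = j
    · simp [MJ, hk]
    · simp [MJ, hk, hQ]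
  · rintro ⟨y, rfl⟩
    obtain ⟨g, hg⟩ := hQj j (y j)
    refine ⟨WithLp.toLp 2 (Pi.single j g), PiLp.ext fun k => ?_⟩
    by_cases hk : k = j
    · subst hk
      simp [MJ, hQ, hg]
    · simp [MJ, hk, hQ]

lemma CFop_comp_CFadj_apply (W V : Fin m → Submodule 𝕜 E) (F : ∀ i, L i → ↥(W i))
    (G : ∀ i, L i → ↥(V i)) (g : FFSpace W) (j : Fin m) :
    (CFop V L G ∘ₗ CFadj W L F) g j = mixedFrameOp 𝕜 (F j) (G j) (g j) := by
  simp [CFop, CFadj]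

lemma isComponentPreserving_Gc [FiniteDimensional 𝕜 E] (W : Fin m → Submodule 𝕜 E)
    (F : ∀ i, L i → ↥(W i)) (hF : ∀ i, Submodule.span 𝕜 (Set.range (F i)) = ⊤)
    {w v : Fin m → ℝ} (hwv : ∀ i, w i * v i ≠ 0) (Sinv : E →ₗ[𝕜] E)
    (h : SFop W L F ∘ₗ Sinv = LinearMap.id) (h' : Sinv ∘ₗ SFop W L F = LinearMap.id) :
    IsComponentPreserving W (fun i => (W i).comap (SFop W L F))
      (CFop _ L (Gc W L F w v Sinv h) ∘ₗ CFadj W L F) := by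
  refine isComponentPreserving_of_surjective _ _ (CFop_comp_CFadj_apply _ _ _ _) fun j => ?_
  set c : 𝕜 := ((w j * v j : ℝ) : 𝕜)
  have hc : c ≠ 0 := RCLike.ofReal_ne_zero.mpr (hwv j)
  have hSSinv : ∀ x, SFop W L F (Sinv x) = x := LinearMap.congr_fun h
  have hSinvS : ∀ x, Sinv (SFop W L F x) = x := LinearMap.congr_fun h'
  have hmaps : ∀ x ∈ W j, (c⁻¹ • Sinv) x ∈ (W j).comap (SFop W L F) := fun x hx => by
    simpa only [Submodule.mem_comap, LinearMap.smul_apply, map_smul, hSSinv]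
      using (W j).smul_mem c⁻¹ hx
  set A := (c⁻¹ • Sinv).restrict hmaps
  have hA : Function.Surjective A := fun y =>
    ⟨⟨c • SFop W L F y, (W j).smul_mem c y.2⟩, Subtype.ext <| by
      simp [A, hc, hSinvS]⟩
  have hGc : Gc W L F w v Sinv h j = A ∘ F j := rfl
  rw [hGc, mixedFrameOp_comp, LinearMap.coe_comp]
  exact hA.comp (mixedFrameOp_self_surjective _ (hF j))

lemma eq_comap_SFop_of_scaledFamily_eq (W V : Fin m → Submodule 𝕜 E) (F : ∀ i, L i → ↥(W i))
    (G : ∀ i, L i → ↥(V i)) (hF : ∀ i, Submodule.span 𝕜 (Set.range (F i)) = ⊤)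
    (hG : ∀ i, Submodule.span 𝕜 (Set.range (G i)) = ⊤) {c : Fin m → ℝ} (hc : ∀ i, c i ≠ 0)
    (Sinv : E →ₗ[𝕜] E) (h : SFop W L F ∘ₗ Sinv = LinearMap.id)
    (h' : Sinv ∘ₗ SFop W L F = LinearMap.id) (hGF : scaledFamily c G = Sinv ∘ flatFamily F)
    (i : Fin m) : V i = (W i).comap (SFop W L F) := by
  have hspan : ∀ (U : Submodule 𝕜 E) (f : L i → U), Submodule.span 𝕜 (Set.range f) = ⊤ →
      Submodule.span 𝕜 (Set.range fun l => (f l : E)) = U := fun U f hf =>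
    (Submodule.span_range_subtype_eq_top_iff U fun l => (f l).2).mp hf
  have hrange : Set.range (Sinv ∘ fun l => (F i l : E)) =
      (c i : 𝕜) • Set.range fun l => (G i l : E) := by
    rw [Set.smul_set_range]
    exact congrArg Set.range (funext fun l => (congrFun hGF ⟨i, l⟩).symm)
  have hcomap : (W i).comap (SFop W L F) = (W i).map Sinv :=
    Submodule.comap_equiv_eq_map_symm (LinearEquiv.ofLinearMap _ _ h h') (W i)
  rw [hcomap, ← hspan _ _ (hF i), Submodule.map_span, ← Set.range_comp, hrange,
    Submodule.span_smul_eq_of_isUnit _ _ (RCLike.ofReal_ne_zero.mpr (hc i)).isUnit,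
    hspan _ _ (hG i)]

end FusionFrameSystem

theorem Gc_optimal_dual_fusion_frame_system_general
    {𝕜 : Type} [RCLike 𝕜] {H : Type} [NormedAddCommGroup H] [InnerProductSpace 𝕜 H]
    [FiniteDimensional 𝕜 H] {m : ℕ}
    (W : Fin m → Submodule 𝕜 H) (w v : Fin m → ℝ) (hw : ∀ i, 0 < w i) (hv : ∀ i, 0 < v i)
    (L : Fin m → Type) [∀ i, Fintype (L i)] [∀ i, DecidableEq (L i)]
    (F : ∀ i, L i → ↥(W i))
    (hF : ∀ i, Submodule.span 𝕜 (Set.range (F i)) = ⊤)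
    (hnorm : ∀ i l, ‖(F i l : H)‖ = 1)
    (Sinv : H →ₗ[𝕜] H) (h : SFop W L F ∘ₗ Sinv = LinearMap.id)
    (h' : Sinv ∘ₗ SFop W L F = LinearMap.id) :
    (synthOp (fun i => Submodule.comap (SFop W L F) (W i)) v ∘ₗ
        CFop _ L (Gc W L F w v Sinv h) ∘ₗ CFadj W L F ∘ₗ analysisOp W w = LinearMap.id) ∧
    IsComponentPreserving W (fun i => Submodule.comap (SFop W L F) (W i))
      (CFop _ L (Gc W L F w v Sinv h) ∘ₗ CFadj W L F) ∧
    (∀ (V : Fin m → Submodule 𝕜 H) (v' : Fin m → ℝ), (∀ i, 0 < v' i) → (⨆ i, V i = ⊤) →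
      ∀ G : ∀ i, L i → ↥(V i), (∀ i, Submodule.span 𝕜 (Set.range (G i)) = ⊤) →
        synthOp V v' ∘ₗ CFop V L G ∘ₗ CFadj W L F ∘ₗ analysisOp W w = LinearMap.id →
        (∑ i, ∑ l, frobSq
            ((synthOp _ v ∘ₗ CFop _ L (Gc W L F w v Sinv h)) ∘ₗ Mpair L i l ∘ₗ
              CFadj W L F ∘ₗ analysisOp W w) ≤
          ∑ i, ∑ l, frobSq
            ((synthOp V v' ∘ₗ CFop V L G) ∘ₗ Mpair L i l ∘ₗ
              CFadj W L F ∘ₗ analysisOp W w)) ∧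
        (∑ i, ∑ l, frobSq
            ((synthOp V v' ∘ₗ CFop V L G) ∘ₗ Mpair L i l ∘ₗ
              CFadj W L F ∘ₗ analysisOp W w) =
          ∑ i, ∑ l, frobSq
            ((synthOp _ v ∘ₗ CFop _ L (Gc W L F w v Sinv h)) ∘ₗ Mpair L i l ∘ₗ
              CFadj W L F ∘ₗ analysisOp W w) →
          synthOp V v' ∘ₗ CFop V L G =
            synthOp _ v ∘ₗ CFop _ L (Gc W L F w v Sinv h))) ∧
    (∀ (V : Fin m → Submodule 𝕜 H), (⨆ i, V i = ⊤) →
      ∀ G : ∀ i, L i → ↥(V i), (∀ i, Submodule.span 𝕜 (Set.range (G i)) = ⊤) →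
        synthOp V v ∘ₗ CFop V L G ∘ₗ CFadj W L F ∘ₗ analysisOp W w = LinearMap.id →
        IsComponentPreserving W V (CFop V L G ∘ₗ CFadj W L F) →
        (∑ i, ∑ l, frobSq
            ((synthOp V v ∘ₗ CFop V L G) ∘ₗ Mpair L i l ∘ₗ
              CFadj W L F ∘ₗ analysisOp W w) =
          ∑ i, ∑ l, frobSq
            ((synthOp _ v ∘ₗ CFop _ L (Gc W L F w v Sinv h)) ∘ₗ Mpair L i l ∘ₗ
              CFadj W L F ∘ₗ analysisOp W w)) →
        (∀ i, V i = Submodule.comap (SFop W L F) (W i)) ∧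
        (∀ i l, (G i l : H) = ((w i * v i : ℝ) : 𝕜)⁻¹ • Sinv (F i l : H))) := by
  have hwv : ∀ i, w i * v i ≠ 0 := fun i => (mul_pos (hw i) (hv i)).ne'
  have hGc := scaledFamily_Gc W F hwv Sinv h
  have hcan : mixedFrameOp 𝕜 (flatFamily F) (Sinv ∘ flatFamily F) = LinearMap.id := by
    rw [mixedFrameOp_comp, ← SFop_eq_mixedFrameOp, h']
  have hdual : ∀ (V : Fin m → Submodule 𝕜 H) (v' : Fin m → ℝ) (G : ∀ i, L i → ↥(V i)),
      synthOp V v' ∘ₗ CFop V L G ∘ₗ CFadj W L F ∘ₗ analysisOp W w = LinearMap.id →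
      mixedFrameOp 𝕜 (flatFamily F) (scaledFamily (w * v') G) =
        mixedFrameOp 𝕜 (flatFamily F) (Sinv ∘ flatFamily F) := fun V v' G hVG => by
    rw [← synthOp_comp_CFop_comp_CFadj_comp_analysisOp, hVG, hcan]
  simp only [sum_frobSq_erasure _ _ _ _ _ _ hnorm, hGc]
  refine ⟨by rw [synthOp_comp_CFop_comp_CFadj_comp_analysisOp, hGc, hcan],
    isComponentPreserving_Gc W F hF hwv Sinv h h',
    fun V v' _ _ G _ hVG => ⟨sum_norm_sq_le_of_mixedFrameOp_eq _ _ _ (hdual V v' G hVG),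
      fun hmin => synthOp_comp_CFop_congr (scaledFamily_eq_of_mul_eq (fun i => (hw i).ne') ?_)⟩,
    fun V _ G hG hVG _ hmin => ?_⟩
  · rw [eq_comp_of_mixedFrameOp_eq_of_sum_norm_sq_eq _ _ _ (hdual V v' G hVG) hmin, hGc]
  · have hGF := eq_comp_of_mixedFrameOp_eq_of_sum_norm_sq_eq _ _ _ (hdual V v G hVG) hmin
    refine ⟨eq_comap_SFop_of_scaledFamily_eq W V F G hF hG hwv Sinv h h' hGF, fun i l => ?_⟩
    have hGil : ((w i * v i : ℝ) : 𝕜) • (G i l : H) = Sinv (F i l) := congrFun hGF ⟨i, l⟩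
    rw [← hGil, smul_smul,
      inv_mul_cancel₀ (RCLike.ofReal_ne_zero.mpr (hwv i)), one_smul]

/-- optimal dual fusion frame systems for one erasure of a local frame
vector, for a fusion frame system `(W,w,𝓕)` with unit-norm local frame vectors:
`(S_𝓕⁻¹W, v, 𝓖_c)` is a component preserving dual fusion frame system minimizing the
one-erasure mean square error; any minimizer `(V,v',𝓖)` satisfies
`T_{V,v'} C_𝓖 = T_{S_𝓕⁻¹W,v} C_{𝓖_c}`; and any component preserving minimizer with
weights `v` equals `(S_𝓕⁻¹W, v, 𝓖_c)`. -/
theorem Gc_optimal_dual_fusion_frame_system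
    {𝕜 : Type} [RCLike 𝕜] {H : Type} [NormedAddCommGroup H] [InnerProductSpace 𝕜 H]
    [FiniteDimensional 𝕜 H] {m : ℕ}
    (W : Fin m → Submodule 𝕜 H) (w v : Fin m → ℝ) (hw : ∀ i, 0 < w i) (hv : ∀ i, 0 < v i)
    (hW : ⨆ i, W i = ⊤)
    (L : Fin m → Type) [∀ i, Fintype (L i)] [∀ i, DecidableEq (L i)]
    (F : ∀ i, L i → ↥(W i))
    (hF : ∀ i, Submodule.span 𝕜 (Set.range (F i)) = ⊤)
    (hnorm : ∀ i l, ‖(F i l : H)‖ = 1)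
    (Sinv : H →ₗ[𝕜] H) (h : SFop W L F ∘ₗ Sinv = LinearMap.id)
    (h' : Sinv ∘ₗ SFop W L F = LinearMap.id) :
    (synthOp (fun i => Submodule.comap (SFop W L F) (W i)) v ∘ₗ
        CFop _ L (Gc W L F w v Sinv h) ∘ₗ CFadj W L F ∘ₗ analysisOp W w = LinearMap.id) ∧
    IsComponentPreserving W (fun i => Submodule.comap (SFop W L F) (W i))
      (CFop _ L (Gc W L F w v Sinv h) ∘ₗ CFadj W L F) ∧
    (∀ (V : Fin m → Submodule 𝕜 H) (v' : Fin m → ℝ), (∀ i, 0 < v' i) → (⨆ i, V i = ⊤) →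
      ∀ G : ∀ i, L i → ↥(V i), (∀ i, Submodule.span 𝕜 (Set.range (G i)) = ⊤) →
        synthOp V v' ∘ₗ CFop V L G ∘ₗ CFadj W L F ∘ₗ analysisOp W w = LinearMap.id →
        (∑ i, ∑ l, frobSq
            ((synthOp _ v ∘ₗ CFop _ L (Gc W L F w v Sinv h)) ∘ₗ Mpair L i l ∘ₗ
              CFadj W L F ∘ₗ analysisOp W w) ≤
          ∑ i, ∑ l, frobSq
            ((synthOp V v' ∘ₗ CFop V L G) ∘ₗ Mpair L i l ∘ₗ
              CFadj W L F ∘ₗ analysisOp W w)) ∧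
        (∑ i, ∑ l, frobSq
            ((synthOp V v' ∘ₗ CFop V L G) ∘ₗ Mpair L i l ∘ₗ
              CFadj W L F ∘ₗ analysisOp W w) =
          ∑ i, ∑ l, frobSq
            ((synthOp _ v ∘ₗ CFop _ L (Gc W L F w v Sinv h)) ∘ₗ Mpair L i l ∘ₗ
              CFadj W L F ∘ₗ analysisOp W w) →
          synthOp V v' ∘ₗ CFop V L G =
            synthOp _ v ∘ₗ CFop _ L (Gc W L F w v Sinv h))) ∧
    (∀ (V : Fin m → Submodule 𝕜 H), (⨆ i, V i = ⊤) →
      ∀ G : ∀ i, L i → ↥(V i), (∀ i, Submodule.span 𝕜 (Set.range (G i)) = ⊤) →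
        synthOp V v ∘ₗ CFop V L G ∘ₗ CFadj W L F ∘ₗ analysisOp W w = LinearMap.id →
        IsComponentPreserving W V (CFop V L G ∘ₗ CFadj W L F) →
        (∑ i, ∑ l, frobSq
            ((synthOp V v ∘ₗ CFop V L G) ∘ₗ Mpair L i l ∘ₗ
              CFadj W L F ∘ₗ analysisOp W w) =
          ∑ i, ∑ l, frobSq
            ((synthOp _ v ∘ₗ CFop _ L (Gc W L F w v Sinv h)) ∘ₗ Mpair L i l ∘ₗ
              CFadj W L F ∘ₗ analysisOp W w)) →
        (∀ i, V i = Submodule.comap (SFop W L F) (W i)) ∧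
        (∀ i l, (G i l : H) = ((w i * v i : ℝ) : 𝕜)⁻¹ • Sinv (F i l : H))) :=
  Gc_optimal_dual_fusion_frame_system_general W w v hw hv L F hF hnorm Sinv h h'
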